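/- For every κ ∈ ℕ, every M > 0 and every δ with 0 < δ < M/2, there exists a map f : ℝ^κ → ℝ^κ that is a finite composition of affine maps and componentwise applications of ReLU(t) = max(t,0), such that (i) ‖f(x) − x‖ < δ for every x ∈ ℝ^κ with ‖x‖ < M + 2δ, and (ii) ‖f(x)‖ ≤ 2M for every x ∈ ℝ^κ, where ‖·‖ denotes the Euclidean norm on ℝ^κ. -/

import Mathlib

/-- Componentwise application of a scalar function to a vector in `ℝ^n`. -/
def compwise {n : ℕ} (σ : ℝ → ℝ) (x : EuclideanSpace ℝ (Fin n)) :
    EuclideanSpace ℝ (Fin n) :=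
  WithLp.toLp 2 (fun i : Fin n => σ (x i))

/-- Realizations of ReLU neural networks: finite compositions of affine maps
and componentwise applications of `ReLU(t) = max t 0`. -/
inductive IsReLUNet :
    ∀ {n m : ℕ}, (EuclideanSpace ℝ (Fin n) → EuclideanSpace ℝ (Fin m)) → Prop
  | affine {n m : ℕ} (A : EuclideanSpace ℝ (Fin n) →ᵃ[ℝ] EuclideanSpace ℝ (Fin m)) :
      IsReLUNet ⇑A
  | relu_comp {n m : ℕ} (f : EuclideanSpace ℝ (Fin n) → EuclideanSpace ℝ (Fin m))
      (hf : IsReLUNet f) :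
      IsReLUNet (fun x => compwise (fun t => max t 0) (f x))
  | affine_comp {n m k : ℕ} (f : EuclideanSpace ℝ (Fin n) → EuclideanSpace ℝ (Fin m))
      (hf : IsReLUNet f) (A : EuclideanSpace ℝ (Fin m) →ᵃ[ℝ] EuclideanSpace ℝ (Fin k)) :
      IsReLUNet (fun x => A (f x))

/-!
Clip every coordinate to `[-c, c]`, where `c = M + 2δ < 2M`: this fixes the ball of radius `c` and
lands in a bounded set. Then apply, in rounds, the cuts `x ↦ x - max (⟪u, x⟫ - c) 0 • u` along
finitely many unit vectors `u` whose caps `{w | γ < ⟪u, w⟫}` cover the unit sphere, for some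
`c / 2M < γ < 1`. Each cut is a ReLU network, fixes the ball of radius `c` and does not increase the
norm. After a round, the last point `y` has `γ ‖y‖ < ⟪u, y⟫` for some `u`, while the cut along `u`
left `⟪u, ·⟫ ≤ c` and the later cuts could raise it only at the expense of `‖·‖²`; so a round
lowers `‖·‖²` by `2c(2γM - c) > 0` unless it ends in the ball of radius `2M`. Finitely many
rounds therefore bring every clipped point into that ball, and the map is the identity on the
ball of radius `c`.
-/

open scoped RealInnerProductSpace

namespace IsReLUNet

variable {n m k : ℕ}

theorem comp {g : EuclideanSpace ℝ (Fin m) → EuclideanSpace ℝ (Fin k)}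
    {f : EuclideanSpace ℝ (Fin n) → EuclideanSpace ℝ (Fin m)}
    (hg : IsReLUNet g) (hf : IsReLUNet f) : IsReLUNet (g ∘ f) := by
  induction hg with
  | affine A => exact .affine_comp f hf A
  | relu_comp g _ ih => exact .relu_comp _ ih
  | affine_comp g _ A ih => exact .affine_comp _ ih A

theorem id : IsReLUNet (id : EuclideanSpace ℝ (Fin n) → EuclideanSpace ℝ (Fin n)) :=
  .affine (AffineMap.id ℝ _)

theorem iterate {f : EuclideanSpace ℝ (Fin n) → EuclideanSpace ℝ (Fin n)}
    (hf : IsReLUNet f) (k : ℕ) : IsReLUNet f^[k] := by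
  induction k with
  | zero => exact .id
  | succ k ih => rw [Function.iterate_succ']; exact hf.comp ih

theorem affine_coord (ℓ : Fin m → EuclideanSpace ℝ (Fin n) →L[ℝ] ℝ) (b : Fin m → ℝ) :
    IsReLUNet fun x => WithLp.toLp 2 fun j => ℓ j x + b j := by
  let L := (WithLp.linearEquiv 2 ℝ (Fin m → ℝ)).symm.toLinearMap ∘ₗ
    LinearMap.pi fun j => (ℓ j : EuclideanSpace ℝ (Fin n) →ₗ[ℝ] ℝ)
  convert IsReLUNet.affine (L.toAffineMap + AffineMap.const ℝ _ (WithLp.toLp 2 b)) using 1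
  ext x j
  simp [L]

end IsReLUNet

section Cuts

variable {E : Type*} [NormedAddCommGroup E] [InnerProductSpace ℝ E] {c : ℝ} {l : List E}
  {u v x : E}

noncomputable def halfspaceCut (c : ℝ) (u x : E) : E := x - max (⟪u, x⟫ - c) 0 • u

theorem halfspaceCut_of_norm_le (hu : ‖u‖ = 1) (hx : ‖x‖ ≤ c) : halfspaceCut c u x = x := by
  have : ⟪u, x⟫ ≤ c := (real_inner_le_norm u x).trans (by rw [hu, one_mul]; exact hx)
  simp [halfspaceCut, max_eq_right (sub_nonpos.2 this)]

theorem norm_halfspaceCut_sq_add_le (hu : ‖u‖ = 1) :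
    ‖halfspaceCut c u x‖ ^ 2 + 2 * c * max (⟪u, x⟫ - c) 0 ≤ ‖x‖ ^ 2 := by
  rcases le_or_gt ⟪u, x⟫ c with h | h
  · simp [halfspaceCut, max_eq_right (sub_nonpos.2 h)]
  · rw [halfspaceCut, max_eq_left (sub_pos.2 h).le, norm_sub_sq_real, real_inner_smul_right,
      norm_smul, hu, mul_one, Real.norm_eq_abs, sq_abs, real_inner_comm u x]
    linarith [sq_nonneg (⟪u, x⟫ - c)]

theorem norm_halfspaceCut_le (hc : 0 ≤ c) (hu : ‖u‖ = 1) : ‖halfspaceCut c u x‖ ≤ ‖x‖ := by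
  have hsq := norm_halfspaceCut_sq_add_le (c := c) (x := x) hu
  have ht : 0 ≤ 2 * c * max (⟪u, x⟫ - c) 0 := by positivity
  exact (pow_le_pow_iff_left₀ (norm_nonneg _) (norm_nonneg _) two_ne_zero).1 (by linarith)

theorem inner_halfspaceCut_le (hu : ‖u‖ = 1) : ⟪u, halfspaceCut c u x⟫ ≤ c := by
  rw [halfspaceCut, inner_sub_right, real_inner_smul_right, real_inner_self_eq_norm_sq, hu]
  rcases le_or_gt ⟪u, x⟫ c with h | h
  · simp [h]
  · simp [max_eq_left (sub_pos.2 h).le]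

theorem inner_halfspaceCut_add_norm_sq_le (hc : 0 ≤ c) (hu : ‖u‖ = 1) (hv : ‖v‖ = 1) :
    2 * c * ⟪v, halfspaceCut c u x⟫ + ‖halfspaceCut c u x‖ ^ 2 ≤ 2 * c * ⟪v, x⟫ + ‖x‖ ^ 2 := by
  have hvu : -1 ≤ ⟪v, u⟫ := (abs_le.1 (by simpa [hu, hv] using abs_real_inner_le_norm v u)).1
  have ht : 0 ≤ c * max (⟪u, x⟫ - c) 0 := mul_nonneg hc (le_max_right _ _)
  have hinner : ⟪v, halfspaceCut c u x⟫ = ⟪v, x⟫ - max (⟪u, x⟫ - c) 0 * ⟪v, u⟫ := by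
    rw [halfspaceCut, inner_sub_right, real_inner_smul_right]
  rw [hinner]
  linarith [norm_halfspaceCut_sq_add_le (c := c) (x := x) hu,
    mul_nonneg ht (neg_le_iff_add_nonneg.1 hvu)]

noncomputable def cutAll (c : ℝ) (l : List E) (x : E) : E :=
  l.foldl (fun y u => halfspaceCut c u y) x

@[simp] theorem cutAll_nil : cutAll c [] x = x := rfl

@[simp] theorem cutAll_cons : cutAll c (u :: l) x = cutAll c l (halfspaceCut c u x) := rfl

theorem cutAll_of_norm_le (hl : ∀ u ∈ l, ‖u‖ = 1) (hx : ‖x‖ ≤ c) : cutAll c l x = x := by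
  induction l with
  | nil => rfl
  | cons u l ih =>
    rw [cutAll_cons, halfspaceCut_of_norm_le (hl u (by simp)) hx]
    exact ih fun v hv => hl v (by simp [hv])

theorem norm_cutAll_le (hc : 0 ≤ c) (hl : ∀ u ∈ l, ‖u‖ = 1) : ‖cutAll c l x‖ ≤ ‖x‖ := by
  induction l generalizing x with
  | nil => rfl
  | cons u l ih =>
    exact (ih fun v hv => hl v (by simp [hv])).trans (norm_halfspaceCut_le hc (hl u (by simp)))

theorem inner_cutAll_add_norm_sq_le (hc : 0 ≤ c) (hl : ∀ u ∈ l, ‖u‖ = 1) (hv : ‖v‖ = 1) :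
    2 * c * ⟪v, cutAll c l x⟫ + ‖cutAll c l x‖ ^ 2 ≤ 2 * c * ⟪v, x⟫ + ‖x‖ ^ 2 := by
  induction l generalizing x with
  | nil => rfl
  | cons u l ih =>
    exact (ih fun v hv => hl v (by simp [hv])).trans
      (inner_halfspaceCut_add_norm_sq_le hc (hl u (by simp)) hv)

theorem inner_cutAll_add_norm_sq_le_of_mem (hc : 0 ≤ c) (hl : ∀ u ∈ l, ‖u‖ = 1) (hu : u ∈ l) :
    2 * c * ⟪u, cutAll c l x⟫ + ‖cutAll c l x‖ ^ 2 ≤ 2 * c * c + ‖x‖ ^ 2 := by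
  induction l generalizing x with
  | nil => simp at hu
  | cons w l ih =>
    have hl' : ∀ v ∈ l, ‖v‖ = 1 := fun v hv => hl v (by simp [hv])
    have hw : ‖w‖ = 1 := hl w (by simp)
    have hnorm : ‖halfspaceCut c w x‖ ^ 2 ≤ ‖x‖ ^ 2 :=
      pow_le_pow_left₀ (norm_nonneg _) (norm_halfspaceCut_le hc hw) 2
    rw [cutAll_cons]
    rcases List.mem_cons.1 hu with rfl | hu
    · have hrest := inner_cutAll_add_norm_sq_le (x := halfspaceCut c u x) hc hl' hw
      have hcut := mul_le_mul_of_nonneg_left (inner_halfspaceCut_le (c := c) (x := x) hw)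
        (by positivity : 0 ≤ 2 * c)
      linarith
    · linarith [ih hl' hu (x := halfspaceCut c w x)]

theorem norm_sq_cutAll_le_of_lt {γ r : ℝ} (hc : 0 ≤ c) (hγ : 0 ≤ γ) (hr : 0 ≤ r)
    (hl : ∀ u ∈ l, ‖u‖ = 1) (hnet : ∀ y ≠ 0, ∃ u ∈ l, γ * ‖y‖ < ⟪u, y⟫)
    (h : r < ‖cutAll c l x‖) : ‖cutAll c l x‖ ^ 2 ≤ ‖x‖ ^ 2 - 2 * c * (γ * r - c) := by
  obtain ⟨u, hul, hu⟩ := hnet _ (norm_pos_iff.1 (hr.trans_lt h))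
  have hmem := inner_cutAll_add_norm_sq_le_of_mem (x := x) hc hl hul
  have hγr : γ * r ≤ ⟪u, cutAll c l x⟫ := (by gcongr : γ * r ≤ γ * ‖cutAll c l x‖).trans hu.le
  linarith [mul_le_mul_of_nonneg_left hγr hc]

theorem exists_list_unit_inner_gt [ProperSpace E] {γ : ℝ} (hγ : γ < 1) :
    ∃ l : List E, (∀ u ∈ l, ‖u‖ = 1) ∧ ∀ y ≠ 0, ∃ u ∈ l, γ * ‖y‖ < ⟪u, y⟫ := by
  obtain ⟨t, ht, hcover⟩ := (isCompact_sphere (0 : E) 1).elim_nhds_subcover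
    (fun u => {w | γ < ⟪u, w⟫}) fun u hu =>
      (isOpen_lt continuous_const (continuous_const.inner continuous_id)).mem_nhds <| by
        rw [mem_sphere_zero_iff_norm] at hu
        simpa [real_inner_self_eq_norm_sq, hu] using hγ
  refine ⟨t.toList, fun u hu => mem_sphere_zero_iff_norm.1 (ht u (Finset.mem_toList.1 hu)),
    fun y hy => ?_⟩
  have hy' : 0 < ‖y‖ := norm_pos_iff.2 hy
  obtain ⟨u, hut, hu⟩ := Set.mem_iUnion₂.1 <| hcover (a := ‖y‖⁻¹ • y) <| by
    simp [norm_smul, hy'.ne']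
  refine ⟨u, Finset.mem_toList.2 hut, ?_⟩
  have : γ < ‖y‖⁻¹ * ⟪u, y⟫ := by simpa [real_inner_smul_right] using hu
  rwa [lt_inv_mul_iff₀ hy', mul_comm] at this

end Cuts

section EuclideanSpace

variable {n : ℕ}

theorem isReLUNet_halfspaceCut (c : ℝ) (u : EuclideanSpace ℝ (Fin n)) :
    IsReLUNet (halfspaceCut c u) := by
  -- `x i = max (x i) 0 - max (-x i) 0` lets the hidden layer carry `x` through the ReLU.
  have hidden := IsReLUNet.relu_comp _ <| IsReLUNet.affine_coord
    (Fin.append (Fin.append (fun i => EuclideanSpace.proj i) fun i => -EuclideanSpace.proj i)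
      ![innerSL ℝ u])
    (Fin.append 0 ![-c])
  convert (IsReLUNet.affine_coord (fun i => EuclideanSpace.proj (Fin.castAdd 1 (Fin.castAdd n i))
    - EuclideanSpace.proj (Fin.castAdd 1 (Fin.natAdd n i))
    - u i • EuclideanSpace.proj (Fin.natAdd (n + n) 0)) 0).comp hidden using 1
  ext x i
  simp [halfspaceCut, compwise, Fin.append_left, Fin.append_right, -Fin.natAdd_eq_addNat,
    ← sub_eq_add_neg, max_zero_sub_max_neg_zero_eq_self, mul_comm]

theorem isReLUNet_cutAll (c : ℝ) (l : List (EuclideanSpace ℝ (Fin n))) :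
    IsReLUNet (cutAll c l) := by
  induction l with
  | nil => exact .id
  | cons u l ih => exact ih.comp (isReLUNet_halfspaceCut c u)

def clip (c : ℝ) (x : EuclideanSpace ℝ (Fin n)) : EuclideanSpace ℝ (Fin n) :=
  WithLp.toLp 2 fun i => max (min (x i) c) (-c)

theorem clip_of_norm_le {c : ℝ} {x : EuclideanSpace ℝ (Fin n)} (hx : ‖x‖ ≤ c) : clip c x = x := by
  ext i
  obtain ⟨h₁, h₂⟩ := abs_le.1 ((PiLp.norm_apply_le x i).trans hx)
  simp [clip, min_eq_left h₂, max_eq_left h₁]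

theorem norm_clip_sq_le {c : ℝ} (hc : 0 ≤ c) (x : EuclideanSpace ℝ (Fin n)) :
    ‖clip c x‖ ^ 2 ≤ n * c ^ 2 := by
  rw [EuclideanSpace.norm_sq_eq]
  calc ∑ i, ‖clip c x i‖ ^ 2 ≤ ∑ _i : Fin n, c ^ 2 := by
        gcongr with i
        exact abs_le.2 ⟨le_max_right _ _, max_le (min_le_right _ _) (by linarith)⟩
    _ = n * c ^ 2 := by simp

theorem isReLUNet_clip {c : ℝ} (hc : 0 ≤ c) : IsReLUNet (clip (n := n) c) := by
  -- `max (min t c) (-c) = max (t + c) 0 - max (t - c) 0 - c`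
  have hidden := IsReLUNet.relu_comp _ <| IsReLUNet.affine_coord
    (Fin.append (fun i : Fin n => EuclideanSpace.proj i) fun i => EuclideanSpace.proj i)
    (Fin.append (fun _ => c) fun _ => -c)
  convert (IsReLUNet.affine_coord (fun i => EuclideanSpace.proj (Fin.castAdd n i)
    - EuclideanSpace.proj (Fin.natAdd n i)) fun _ => -c).comp hidden using 1
  ext x i
  simp only [clip, compwise, Function.comp_apply, sub_apply, PiLp.proj_apply,
    Fin.append_left, Fin.append_right]
  simp only [max_def, min_def]
  split_ifs <;> linarith

end EuclideanSpace

theorem apply_iterate_le_max_sub {α : Type*} {φ : α → ℝ} {f : α → α} {r Δ : ℝ} (hΔ : 0 ≤ Δ)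
    (hf : ∀ x, r < φ (f x) → φ (f x) ≤ φ x - Δ) (k : ℕ) (x : α) :
    φ (f^[k] x) ≤ max r (φ x - k * Δ) := by
  induction k with
  | zero => simp
  | succ k ih =>
    rw [Function.iterate_succ_apply']
    by_cases h : r < φ (f (f^[k] x))
    · have hdrop := hf _ h
      push_cast
      rcases le_max_iff.1 ih with hy | hy
      · exact le_max_of_le_left (by linarith)
      · exact le_max_of_le_right (by linarith)
    · exact (not_lt.1 h).trans (le_max_left _ _)

/-- clipping lemma: a ReLU network close to the identity on a
ball and globally bounded by `2M`. -/
theorem stmt_6 (κ : ℕ) (M δ : ℝ) (hM : 0 < M) (hδ : 0 < δ) (hδM : δ < M / 2) :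
    ∃ f : EuclideanSpace ℝ (Fin κ) → EuclideanSpace ℝ (Fin κ),
      IsReLUNet f ∧
      (∀ x : EuclideanSpace ℝ (Fin κ), ‖x‖ < M + 2 * δ → ‖f x - x‖ < δ) ∧
      (∀ x : EuclideanSpace ℝ (Fin κ), ‖f x‖ ≤ 2 * M) := by
  set c := M + 2 * δ
  have hc : 0 < c := by positivity
  obtain ⟨γ, hcγ, hγ⟩ := exists_between ((div_lt_one (by positivity : 0 < 2 * M)).2
    (by linarith : c < 2 * M))
  have hγ₀ : 0 ≤ γ := (div_nonneg hc.le (by positivity)).trans hcγ.le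
  set Δ := 2 * c * (γ * (2 * M) - c)
  have hΔ : 0 < Δ := mul_pos (by positivity) (by rw [div_lt_iff₀ (by positivity)] at hcγ; linarith)
  obtain ⟨l, hl, hnet⟩ := exists_list_unit_inner_gt (E := EuclideanSpace ℝ (Fin κ)) hγ
  obtain ⟨K, hK⟩ := exists_nat_ge (κ * c ^ 2 / Δ)
  refine ⟨(cutAll c l)^[K] ∘ clip c, ((isReLUNet_cutAll c l).iterate K).comp (isReLUNet_clip hc.le),
    fun x hx => ?_, fun x => ?_⟩
  · have hx : ‖x‖ ≤ c := hx.le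
    simp [clip_of_norm_le hx, Function.iterate_fixed (cutAll_of_norm_le hl hx), hδ]
  · have hdescent := apply_iterate_le_max_sub (φ := fun y => ‖y‖ ^ 2) (r := (2 * M) ^ 2) hΔ.le
      (fun y hy => norm_sq_cutAll_le_of_lt hc.le hγ₀ (by positivity) hl hnet
        (lt_of_pow_lt_pow_left₀ 2 (norm_nonneg _) hy)) K (clip c x)
    have hKΔ : ‖clip c x‖ ^ 2 ≤ K * Δ :=
      (norm_clip_sq_le hc.le x).trans ((div_le_iff₀ hΔ).1 hK)
    have hsq : ‖((cutAll c l)^[K] ∘ clip c) x‖ ^ 2 ≤ (2 * M) ^ 2 :=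
      hdescent.trans (max_le le_rfl (by linarith [sq_nonneg (2 * M)]))
    exact (pow_le_pow_iff_left₀ (norm_nonneg _) (by positivity) two_ne_zero).1 hsq
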